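/- (Special case of the bialternant.) Under the hypotheses of the column-side bialternant factorization with all ξ_j ≡ 1, the unshifted Toeplitz determinant equals det[φ̂(i-j)]_{i,j=1}^N = ∏_{l=1}^N φ_+(y_l). -/

import Mathlib

/-!
On `|z| = ρ` one has `φ₋(z) z^(-k-1) = z^(N-1-k) / ∏ (z - y_l)`. Expanding `1 / ∏ (z - y_l)` in
partial fractions with the Lagrange nodal weights `w_l = ∏_{m ≠ l} (y_l - y_m)⁻¹` and applying
Cauchy's formula to each term gives `φ̂(i - j) = ∑_l y_l^(N-1-i) · w_l φ₊(y_l) · y_l^j`. So the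
Toeplitz matrix is (reversed Vandermonde)ᵀ · diag(w_l φ₊(y_l)) · Vandermonde, and the bialternant
identity `S_1 = 1` is the statement that the two Vandermonde determinants cancel `∏_l w_l`.
-/

/-- The `k`-th Fourier coefficient of a function, computed over the circle of radius `ρ`. -/
noncomputable def fcR (ρ : ℝ) (f : ℂ → ℂ) (k : ℤ) : ℂ :=
  (2 * (Real.pi : ℂ) * Complex.I)⁻¹ * (∮ z in C(0, ρ), f z * z ^ (-k - 1))

open Finset Matrix Metric Complex

section

variable {F ι : Type*} [Field F] [Fintype ι]

theorem inv_prod_sub_eq_sum_nodalWeight_mul_inv_sub [DecidableEq ι] [Nonempty ι] {v : ι → F}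
    (hv : Function.Injective v) {x : F} (hx : ∀ i, x ≠ v i) :
    (∏ i, (x - v i))⁻¹ = ∑ i, Lagrange.nodalWeight univ v i * (x - v i)⁻¹ := by
  have h := Lagrange.eval_interpolate_not_at_node (s := univ) (v := v) 1 fun i _ => hx i
  simp only [Lagrange.interpolate_one hv.injOn univ_nonempty, Polynomial.eval_one,
    Lagrange.eval_nodal, Pi.one_apply, mul_one] at h
  exact (eq_inv_of_mul_eq_one_right h.symm).symm

theorem prod_inv_one_sub_div (y : ι → F) {z : F} (hz : z ≠ 0) :
    ∏ l, (1 - y l / z)⁻¹ = z ^ Fintype.card ι / ∏ l, (z - y l) := by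
  rw [← card_univ, ← prod_const, ← prod_div_distrib]
  exact prod_congr rfl fun l _ => by rw [one_sub_div hz, inv_div]

/-- The constraint `k + e = card ι - 1` with `e : ℕ` restricts to `k < card ι`, where
`z ^ card ι * z ^ (-k - 1)` is a polynomial and the only poles inside the circle are the `y l`. -/
theorem fcR_mul_prod_inv_one_sub_div [DecidableEq ι] [Nonempty ι] {ρ : ℝ} (hρ : 0 < ρ)
    {f : ℂ → ℂ} (hf : DifferentiableOn ℂ f (closedBall 0 ρ)) {y : ι → ℂ}
    (hy : Function.Injective y) (hyρ : ∀ l, ‖y l‖ < ρ) {k : ℤ} {e : ℕ}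
    (hke : k + e = Fintype.card ι - 1) :
    fcR ρ (fun z => f z * ∏ l, (1 - y l / z)⁻¹) k
      = ∑ l, Lagrange.nodalWeight univ y l * (f (y l) * y l ^ e) := by
  set w := Lagrange.nodalWeight univ y
  have hfe : DifferentiableOn ℂ (fun z => f z * z ^ e) (closedBall 0 ρ) :=
    hf.mul (differentiable_pow e).differentiableOn
  have hsphere : ∀ z ∈ sphere (0 : ℂ) ρ, ∀ l, z ≠ y l := fun z hz l h =>
    (hyρ l).ne (h ▸ mem_sphere_zero_iff_norm.mp hz)
  have hpf : Set.EqOn (fun z => f z * (∏ l, (1 - y l / z)⁻¹) * z ^ (-k - 1))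
      (fun z => ∑ l, w l * ((z - y l)⁻¹ * (f z * z ^ e))) (sphere 0 ρ) := by
    intro z hz
    have hz0 : z ≠ 0 := ne_zero_of_mem_sphere hρ.ne' ⟨z, hz⟩
    have hzpow : z ^ Fintype.card ι * z ^ (-k - 1) = z ^ e := by
      rw [← zpow_natCast, ← zpow_add₀ hz0, ← zpow_natCast]
      congr 1
      omega
    calc f z * (∏ l, (1 - y l / z)⁻¹) * z ^ (-k - 1)
        = (∏ l, (z - y l))⁻¹ * (f z * z ^ e) := by
          rw [prod_inv_one_sub_div y hz0, ← hzpow]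
          ring
      _ = ∑ l, w l * ((z - y l)⁻¹ * (f z * z ^ e)) := by
          rw [inv_prod_sub_eq_sum_nodalWeight_mul_inv_sub hy (hsphere z hz), sum_mul]
          exact sum_congr rfl fun l _ => mul_assoc _ _ _
  have hint : ∀ l, CircleIntegrable (fun z => w l * ((z - y l)⁻¹ * (f z * z ^ e))) 0 ρ :=
    fun l => (continuousOn_const.mul <| ((continuousOn_id.sub continuousOn_const).inv₀
      fun z hz => sub_ne_zero.mpr (hsphere z hz l)).mul
        (hfe.continuousOn.mono sphere_subset_closedBall)).circleIntegrable hρ.le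
  have hcauchy : ∀ l, (∮ z in C(0, ρ), (z - y l)⁻¹ * (f z * z ^ e))
      = 2 * Real.pi * I * (f (y l) * y l ^ e) := fun l =>
    hfe.circleIntegral_sub_inv_smul (mem_ball_zero_iff.mpr (hyρ l))
  unfold fcR
  rw [circleIntegral.integral_congr hρ.le hpf, circleIntegral.integral_fun_sum
    fun l _ => hint l, mul_sum]
  refine sum_congr rfl fun l _ => ?_
  rw [circleIntegral.integral_const_mul, hcauchy]
  field_simp

end

theorem prod_prod_erase_sub_eq_det_vandermonde_mul_det_projVandermonde {R : Type*} [CommRing R]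
    {n : ℕ} (v : Fin n → R) :
    ∏ i, ∏ j ∈ univ.erase i, (v i - v j) = det (vandermonde v) * det (projVandermonde 1 v) := by
  have hsplit : ∀ i : Fin n, univ.erase i = Iio i ∪ Ioi i := fun i => by
    ext j
    simp
  have hdisj : ∀ i : Fin n, Disjoint (Iio i) (Ioi i) := fun i =>
    disjoint_left.mpr fun j hj hj' => (mem_Iio.mp hj).asymm (mem_Ioi.mp hj')
  simp_rw [det_vandermonde, det_projVandermonde, Pi.one_apply, one_mul, hsplit,
    prod_union (hdisj _), prod_mul_distrib]
  congr 1
  exact prod_comm' fun i j => by simp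

theorem det_vandermonde_mul_det_projVandermonde_mul_prod_nodalWeight {K : Type*} [Field K]
    {n : ℕ} {v : Fin n → K} (hv : Function.Injective v) :
    det (vandermonde v) * det (projVandermonde 1 v) * ∏ i, Lagrange.nodalWeight univ v i = 1 := by
  have hw : ∏ i, Lagrange.nodalWeight univ v i ≠ 0 :=
    prod_ne_zero_iff.mpr fun i _ => Lagrange.nodalWeight_ne_zero hv.injOn (mem_univ i)
  simp only [Lagrange.nodalWeight, prod_inv_distrib,
    prod_prod_erase_sub_eq_det_vandermonde_mul_det_projVandermonde] at hw ⊢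
  exact mul_inv_cancel₀ (mt inv_eq_zero.mpr hw)

theorem toeplitz_det_rank_N_rational_minus_general {N : ℕ} (y : Fin N → ℂ)
    (hy : Function.Injective y)
    (ρ : ℝ) (hρ0 : 0 < ρ) (hρ1 : ρ < 1) (hρy : ∀ l, ‖y l‖ < ρ)
    (r : ℝ) (hr : 1 < r)
    (φp : ℂ → ℂ) (hp : DifferentiableOn ℂ φp (Metric.ball (0 : ℂ) r)) :
    Matrix.det (Matrix.of fun i j : Fin N =>
        fcR ρ (fun z => φp z * ∏ l, (1 - y l / z)⁻¹) ((i : ℤ) - (j : ℤ)))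
      = ∏ l, φp (y l) := by
  have hφ : DifferentiableOn ℂ φp (closedBall 0 ρ) :=
    hp.mono (closedBall_subset_ball (hρ1.trans hr))
  set w := Lagrange.nodalWeight univ y
  have hfactor : (of fun i j : Fin N =>
        fcR ρ (fun z => φp z * ∏ l, (1 - y l / z)⁻¹) ((i : ℤ) - (j : ℤ)))
      = (projVandermonde 1 y)ᵀ * diagonal (fun l => w l * φp (y l)) * vandermonde y := by
    ext i j
    have : Nonempty (Fin N) := ⟨i⟩
    have hke : ((i : ℤ) - j) + ((Fin.rev i : ℕ) + j : ℕ) = Fintype.card (Fin N) - 1 := by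
      rw [Fintype.card_fin, Fin.val_rev]
      omega
    rw [of_apply, fcR_mul_prod_inv_one_sub_div hρ0 hφ hy hρy hke, mul_apply]
    refine sum_congr rfl fun l _ => ?_
    rw [mul_diagonal, vandermonde_apply, transpose_apply, projVandermonde_apply, Pi.one_apply,
      one_pow, one_mul, pow_add]
    ring
  calc _ = det (vandermonde y) * det (projVandermonde 1 y) * (∏ l, w l) * ∏ l, φp (y l) := by
        rw [hfactor, det_mul, det_mul, det_transpose, det_diagonal, prod_mul_distrib]
        ring
    _ = ∏ l, φp (y l) := by
        rw [det_vandermonde_mul_det_projVandermonde_mul_prod_nodalWeight hy, one_mul]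

/-- Product formula for the unshifted Toeplitz determinant: with pairwise distinct `|y_l| < 1`,
`φ₋(z) = ∏ (1 - y_l/z)⁻¹`, `φ₊` analytic nonvanishing near the closed unit disk with
`φ₊(0) = 1`, and `φ = φ₋ φ₊`, one has `det[φ̂(i-j)]_{i,j=1}^N = ∏_{l=1}^N φ₊(y_l)`. -/
theorem toeplitz_det_rank_N_rational_minus {N : ℕ} (y : Fin N → ℂ)
    (hy : Function.Injective y) (hylt : ∀ l, ‖y l‖ < 1)
    (ρ : ℝ) (hρ0 : 0 < ρ) (hρ1 : ρ < 1) (hρy : ∀ l, ‖y l‖ < ρ)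
    (r : ℝ) (hr : 1 < r)
    (φp : ℂ → ℂ) (hp : DifferentiableOn ℂ φp (Metric.ball (0 : ℂ) r))
    (hp0 : φp 0 = 1) (hpne : ∀ z ∈ Metric.ball (0 : ℂ) r, φp z ≠ 0) :
    Matrix.det (Matrix.of fun i j : Fin N =>
        fcR ρ (fun z => φp z * ∏ l, (1 - y l / z)⁻¹) ((i : ℤ) - (j : ℤ)))
      = ∏ l, φp (y l) :=
  toeplitz_det_rank_N_rational_minus_general y hy ρ hρ0 hρ1 hρy r hr φp hp
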